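/- For all positive integers m, n₁, n₂: f(m, n₁ + n₂) ≥ f(m, n₁) · f(m, n₂), i.e. the number of unimodular triangulations of the m × n grid rectangle is supermultiplicative in n. -/

import Mathlib

noncomputable section

/-- Points of the plane `ℝ²`. -/
abbrev Pt := ℝ × ℝ

/-- The embedding of the lattice `ℤ²` into `ℝ²`. -/
def toPt (v : ℤ × ℤ) : Pt := ((v.1 : ℝ), (v.2 : ℝ))

/-- The integer points of `ℝ²`. -/
def intPts : Set Pt := Set.range toPt

/-- The half-integer points `(1/2)ℤ²` of `ℝ²`. -/
def halfPts : Set Pt := {p | (∃ a : ℤ, p.1 = (a : ℝ) / 2) ∧ (∃ b : ℤ, p.2 = (b : ℝ) / 2)}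

/-- The convex hull in `ℝ²` of a finite set of lattice points. -/
def hull (s : Finset (ℤ × ℤ)) : Set Pt := convexHull ℝ (toPt '' ↑s)

/-- A unimodular (= maximal lattice) triangulation of a closed region `R ⊆ ℝ²`:
a finite family of lattice triangles of area `1/2` covering `R`, any two of which
meet in a common face, and whose vertex set is exactly `R ∩ ℤ²`. -/
structure UnimodularTriangulation (R : Set Pt) where
  /-- the triangles, each given by its (three-element) vertex set -/
  tris : Finset (Finset (ℤ × ℤ))
  card3 : ∀ T ∈ tris, T.card = 3
  /-- each triangle is unimodular, i.e. has area 1/2 -/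
  unimodular : ∀ T ∈ tris, ∀ a ∈ T, ∀ b ∈ T, ∀ c ∈ T,
    a ≠ b → a ≠ c → b ≠ c →
    |(b.1 - a.1) * (c.2 - a.2) - (c.1 - a.1) * (b.2 - a.2)| = 1
  /-- the triangles cover exactly `R` -/
  cover : ⋃ T ∈ tris, hull T = R
  /-- any two triangles intersect in a common face -/
  glue : ∀ T₁ ∈ tris, ∀ T₂ ∈ tris, hull T₁ ∩ hull T₂ = hull (T₁ ∩ T₂)
  /-- the vertex set is exactly `R ∩ ℤ²` -/
  vertices : ∀ v : ℤ × ℤ, (∃ T ∈ tris, v ∈ T) ↔ toPt v ∈ R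

/-- The edges of a triangulation: the two-element subsets of its triangles. -/
def UnimodularTriangulation.edges {R : Set Pt} (𝒯 : UnimodularTriangulation R) :
    Finset (Finset (ℤ × ℤ)) :=
  𝒯.tris.biUnion fun T => T.powersetCard 2

/-- The segment in `ℝ²` spanned by an edge. -/
def edgeSeg (e : Finset (ℤ × ℤ)) : Set Pt := convexHull ℝ (toPt '' ↑e)

open scoped Classical in
/-- The inner (non-boundary) edges of a triangulation of `R`: those edges whose
segment is not contained in the boundary (topological frontier) of `R`. -/
def UnimodularTriangulation.innerEdges {R : Set Pt} (𝒯 : UnimodularTriangulation R) :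
    Finset (Finset (ℤ × ℤ)) :=
  𝒯.edges.filter fun e => ¬ (edgeSeg e ⊆ frontier R)

/-- The midpoint of an edge `{u, v}`. -/
def edgeMid (e : Finset (ℤ × ℤ)) : Pt := (2 : ℝ)⁻¹ • ∑ v ∈ e, toPt v

/-- The grid rectangle `P_{m,n} = [0,m] × [0,n] ⊆ ℝ²`. -/
def gridRegion (m n : ℕ) : Set Pt := Set.Icc ((0, 0) : Pt) ((m : ℝ), (n : ℝ))

/-- `f m n` is the number of unimodular triangulations of the grid rectangle `P_{m,n}`. -/
def f (m n : ℕ) : ℕ := Nat.card (UnimodularTriangulation (gridRegion m n))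

open Finset
open scoped Pointwise

lemma toPt_inj : Function.Injective toPt := by
  rintro ⟨a,b⟩ ⟨c,d⟩ h
  simp only [toPt, Prod.mk.injEq] at h
  exact Prod.ext (by exact_mod_cast h.1) (by exact_mod_cast h.2)

lemma hull_eq (T : Finset (ℤ × ℤ)) : hull T = convexHull ℝ ↑(T.image toPt) := by
  rw [hull, Finset.coe_image]

/-- Face lemma: intersecting a convex hull with a supporting line. -/
lemma hull_inter_line (s : Finset Pt) (c : ℝ) (h : ∀ p ∈ s, p.2 ≤ c) :
    convexHull ℝ (↑s) ∩ {p : Pt | p.2 = c}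
      = convexHull ℝ ↑(s.filter (fun p => p.2 = c)) := by
  classical
  apply Set.Subset.antisymm
  · rintro x ⟨hx, hxc⟩
    rw [Finset.convexHull_eq] at hx ⊢
    obtain ⟨w, hw0, hw1, hwx⟩ := hx
    rw [Finset.centerMass_eq_of_sum_1 _ _ hw1] at hwx
    have hx2 : x.2 = ∑ y ∈ s, w y * y.2 := by
      rw [← hwx, Prod.snd_sum]; simp
    have hzero : ∀ y ∈ s, w y * (c - y.2) = 0 := by
      rw [← Finset.sum_eq_zero_iff_of_nonneg
        (fun y hy => mul_nonneg (hw0 y hy) (by linarith [h y hy]))]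
      have : ∑ y ∈ s, w y * (c - y.2) = (∑ y ∈ s, w y) * c - ∑ y ∈ s, w y * y.2 := by
        rw [Finset.sum_mul, ← Finset.sum_sub_distrib]; exact Finset.sum_congr rfl (fun y _ => by ring)
      rw [this, hw1, ← hx2, hxc]; ring
    have hwz : ∀ y ∈ s, y ∉ s.filter (fun p => p.2 = c) → w y = 0 := by
      intro y hy hyn
      simp only [Finset.mem_filter, hy, true_and] at hyn
      have := hzero y hy
      rcases mul_eq_zero.1 this with h' | h'
      · exact h'
      · exact absurd (by linarith) hyn
    refine ⟨w, fun y hy => hw0 y (Finset.filter_subset _ _ hy), ?_, ?_⟩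
    · rw [Finset.sum_subset (Finset.filter_subset _ _) hwz]; exact hw1
    · rw [Finset.centerMass_eq_of_sum_1]
      · rw [Finset.sum_subset (Finset.filter_subset _ _)
          (fun y hy hyn => by rw [hwz y hy hyn, zero_smul])]
        simpa using hwx
      · rw [Finset.sum_subset (Finset.filter_subset _ _) hwz]; exact hw1
  · apply Set.subset_inter
    · exact convexHull_mono (by exact_mod_cast Finset.filter_subset _ _)
    · apply convexHull_min
      · intro p hp
        simp only [Finset.coe_filter, Set.mem_setOf_eq] at hp
        exact hp.2
      · exact convex_hyperplane ⟨fun a b => rfl, fun r x => rfl⟩ c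

/-- Face lemma, `≥` version. -/
lemma hull_inter_line_ge (s : Finset Pt) (c : ℝ) (h : ∀ p ∈ s, c ≤ p.2) :
    convexHull ℝ (↑s) ∩ {p : Pt | p.2 = c}
      = convexHull ℝ ↑(s.filter (fun p => p.2 = c)) := by
  classical
  apply Set.Subset.antisymm
  · rintro x ⟨hx, hxc⟩
    rw [Finset.convexHull_eq] at hx ⊢
    obtain ⟨w, hw0, hw1, hwx⟩ := hx
    rw [Finset.centerMass_eq_of_sum_1 _ _ hw1] at hwx
    have hx2 : x.2 = ∑ y ∈ s, w y * y.2 := by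
      rw [← hwx, Prod.snd_sum]; simp
    have hzero : ∀ y ∈ s, w y * (y.2 - c) = 0 := by
      rw [← Finset.sum_eq_zero_iff_of_nonneg
        (fun y hy => mul_nonneg (hw0 y hy) (by linarith [h y hy]))]
      have : ∑ y ∈ s, w y * (y.2 - c) = (∑ y ∈ s, w y * y.2) - (∑ y ∈ s, w y) * c := by
        rw [Finset.sum_mul, ← Finset.sum_sub_distrib]; exact Finset.sum_congr rfl (fun y _ => by ring)
      rw [this, hw1, ← hx2, hxc]; ring
    have hwz : ∀ y ∈ s, y ∉ s.filter (fun p => p.2 = c) → w y = 0 := by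
      intro y hy hyn
      simp only [Finset.mem_filter, hy, true_and] at hyn
      have := hzero y hy
      rcases mul_eq_zero.1 this with h' | h'
      · exact h'
      · exact absurd (by linarith) hyn
    refine ⟨w, fun y hy => hw0 y (Finset.filter_subset _ _ hy), ?_, ?_⟩
    · rw [Finset.sum_subset (Finset.filter_subset _ _) hwz]; exact hw1
    · rw [Finset.centerMass_eq_of_sum_1]
      · rw [Finset.sum_subset (Finset.filter_subset _ _)
          (fun y hy hyn => by rw [hwz y hy hyn, zero_smul])]
        simpa using hwx
      · rw [Finset.sum_subset (Finset.filter_subset _ _) hwz]; exact hw1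
  · apply Set.subset_inter
    · exact convexHull_mono (by exact_mod_cast Finset.filter_subset _ _)
    · apply convexHull_min
      · intro p hp
        simp only [Finset.coe_filter, Set.mem_setOf_eq] at hp
        exact hp.2
      · exact convex_hyperplane ⟨fun a b => rfl, fun r x => rfl⟩ c

/-- Hull of a horizontal lattice segment of length `k ≤ 1`. -/
lemma hull_Icc (a k N : ℤ) (hk : k ≤ 1) :
    hull ((Finset.Icc a (a+k)).image (fun x => (x, N)))
      = {p : Pt | p.2 = (N:ℝ) ∧ (a:ℝ) ≤ p.1 ∧ p.1 ≤ (a:ℝ) + (k:ℝ)} := by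
  rcases lt_trichotomy k 0 with hk0 | hk0 | hk0
  · have : Finset.Icc a (a+k) = ∅ := Finset.Icc_eq_empty (by omega)
    rw [this]
    ext p
    simp only [Finset.image_empty, hull, Finset.coe_empty, Set.image_empty,
      convexHull_empty, Set.mem_empty_iff_false, Set.mem_setOf_eq, false_iff]
    rintro ⟨-, h1, h2⟩
    have : (k:ℝ) ≤ -1 := by exact_mod_cast (by omega : k ≤ -1)
    linarith
  · subst hk0
    have : Finset.Icc a (a+0) = {a} := by simp
    rw [this, Finset.image_singleton, hull]
    ext p
    simp only [Finset.coe_singleton, Set.image_singleton, convexHull_singleton,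
      Set.mem_singleton_iff, Set.mem_setOf_eq, toPt]
    constructor
    · rintro rfl; simp
    · rintro ⟨h1, h2, h3⟩
      have hp1 : p.1 = (a:ℝ) := by push_cast at h3 ⊢; linarith
      have : p = (p.1, p.2) := rfl
      rw [this, hp1, h1]
  · have hk1 : k = 1 := by omega
    subst hk1
    have h2 : Finset.Icc a (a+1) = {a, a+1} := by ext x; simp [Finset.mem_Icc]; omega
    rw [h2, hull]
    have : (Finset.image (fun x => (x, N)) {a, a+1} : Finset (ℤ×ℤ)) = {(a,N), (a+1,N)} := by
      simp
    rw [this]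
    have himg : toPt '' (↑({(a,N), (a+1,N)} : Finset (ℤ×ℤ)))
        = {toPt (a,N), toPt (a+1,N)} := by
      simp [Set.image_insert_eq]
    rw [himg, convexHull_pair, segment_eq_image]
    ext p
    simp only [Set.mem_image, Set.mem_Icc, Set.mem_setOf_eq, toPt]
    constructor
    · rintro ⟨θ, ⟨h0, h1⟩, rfl⟩
      push_cast
      refine ⟨by simp; ring, by simp; nlinarith, by simp; nlinarith⟩
    · rintro ⟨h1, h2, h3⟩
      refine ⟨p.1 - a, ⟨by linarith, by push_cast at h3; linarith⟩, ?_⟩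
      have : ((1 : ℝ) - (p.1 - ↑a)) • ((a:ℝ), (N:ℝ)) + (p.1 - ↑a) • ((↑(a+1):ℝ), (N:ℝ))
          = (p.1, (N:ℝ)) := by
        push_cast
        ext <;> simp <;> ring
      rw [this, ← h1]

/-- Abbreviation for the unimodularity condition. -/
def Unim (T : Finset (ℤ × ℤ)) : Prop :=
  ∀ a ∈ T, ∀ b ∈ T, ∀ c ∈ T, a ≠ b → a ≠ c → b ≠ c →
    |(b.1 - a.1) * (c.2 - a.2) - (c.1 - a.1) * (b.2 - a.2)| = 1

lemma not_all_on_line {T : Finset (ℤ × ℤ)} (hc : T.card = 3) (hu : Unim T) (N : ℤ) :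
    ¬ (∀ v ∈ T, v.2 = N) := by
  classical
  intro hall
  obtain ⟨x, y, z, hxy, hxz, hyz, rfl⟩ := Finset.card_eq_three.1 hc
  have hx : x.2 = N := hall x (by simp)
  have hy : y.2 = N := hall y (by simp)
  have hz : z.2 = N := hall z (by simp)
  have := hu x (by simp) y (by simp) z (by simp) hxy hxz hyz
  rw [hx, hy, hz] at this
  simp at this

lemma line_filter_shape {T : Finset (ℤ × ℤ)} (hc : T.card = 3) (hu : Unim T) (N : ℤ) :
    ∃ a k : ℤ, k ≤ 1 ∧
      T.filter (fun v => v.2 = N) = (Finset.Icc a (a+k)).image (fun x => (x, N)) := by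
  classical
  set A := T.filter (fun v => v.2 = N) with hA
  have hAsub : A ⊆ T := Finset.filter_subset _ _
  have hAcard : A.card ≤ 3 := hc ▸ Finset.card_le_card hAsub
  interval_cases h : A.card
  · refine ⟨0, -1, by omega, ?_⟩
    rw [Finset.card_eq_zero.1 h]
    rw [Finset.Icc_eq_empty (by omega), Finset.image_empty]
  · obtain ⟨v, hv⟩ := Finset.card_eq_one.1 h
    have hvA : v ∈ A := by rw [hv]; exact Finset.mem_singleton_self v
    have hv2 : v.2 = N := (Finset.mem_filter.1 hvA).2
    refine ⟨v.1, 0, by omega, ?_⟩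
    rw [hv]
    have : Finset.Icc v.1 (v.1 + 0) = {v.1} := by simp
    rw [this, Finset.image_singleton, ← hv2]
  · obtain ⟨u, w, huw, hA2⟩ := Finset.card_eq_two.1 h
    have hu' : u ∈ A := by rw [hA2]; exact Finset.mem_insert_self u {w}
    have hw' : w ∈ A := by rw [hA2]; exact Finset.mem_insert_of_mem (Finset.mem_singleton_self w)
    have hu2 : u.2 = N := (Finset.mem_filter.1 hu').2
    have hw2 : w.2 = N := (Finset.mem_filter.1 hw').2
    have huT : u ∈ T := hAsub hu'
    have hwT : w ∈ T := hAsub hw'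
    -- third vertex
    have hAne : A ≠ T := fun hAT => by rw [hAT] at h; omega
    obtain ⟨z, hzT, hzA⟩ : ∃ z ∈ T, z ∉ A := by
      by_contra hcon
      push_neg at hcon
      exact hAne (Finset.Subset.antisymm hAsub hcon)
    have hzu : z ≠ u := fun h' => hzA (h' ▸ hu')
    have hzw : z ≠ w := fun h' => hzA (h' ▸ hw')
    have hz2 : z.2 ≠ N := fun h' => hzA (Finset.mem_filter.2 ⟨hzT, h'⟩)
    have hdet := hu u huT w hwT z hzT huw (fun h' => hzu h'.symm) (fun h' => hzw h'.symm)
    rw [hu2, hw2] at hdet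
    have hdet' : |(w.1 - u.1) * (z.2 - N)| = 1 := by
      have : (w.1 - u.1) * (z.2 - N) - (z.1 - u.1) * (N - N) = (w.1 - u.1) * (z.2 - N) := by ring
      rwa [this] at hdet
    rw [abs_mul] at hdet'
    have h1 : |w.1 - u.1| = 1 := by
      rcases Int.mul_eq_one_iff_eq_one_or_neg_one.1 hdet' with ⟨h', -⟩ | ⟨h', -⟩
      · exact h'
      · have := abs_nonneg (w.1 - u.1); omega
    have hu' : u = (u.1, N) := Prod.ext rfl hu2
    have hw' : w = (w.1, N) := Prod.ext rfl hw2
    rcases abs_eq (by norm_num : (0:ℤ) ≤ 1) |>.1 h1 with h' | h'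
    · refine ⟨u.1, 1, le_refl _, ?_⟩
      have hIcc : Finset.Icc u.1 (u.1 + 1) = {u.1, u.1 + 1} := by
        ext x; simp [Finset.mem_Icc]; omega
      rw [hA2, hIcc]
      have : w.1 = u.1 + 1 := by omega
      rw [hu', hw', this]
      simp [Finset.image_insert]
    · refine ⟨w.1, 1, le_refl _, ?_⟩
      have hIcc : Finset.Icc w.1 (w.1 + 1) = {w.1, w.1 + 1} := by
        ext x; simp [Finset.mem_Icc]; omega
      rw [hA2, hIcc]
      have : u.1 = w.1 + 1 := by omega
      rw [hu', hw', this]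
      simp [Finset.image_insert, Finset.pair_comm]
  · exfalso
    have hAT : A = T := Finset.eq_of_subset_of_card_le hAsub (by omega)
    refine not_all_on_line hc hu N (fun v hv => ?_)
    rw [← hAT] at hv
    exact (Finset.mem_filter.1 hv).2

lemma filter_image_toPt (T : Finset (ℤ × ℤ)) (N : ℤ) :
    (T.image toPt).filter (fun p => p.2 = (N:ℝ))
      = (T.filter (fun v => v.2 = N)).image toPt := by
  classical
  ext p
  simp only [Finset.mem_filter, Finset.mem_image]
  constructor
  · rintro ⟨⟨v, hv, rfl⟩, h2⟩
    simp only [toPt] at h2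
    exact ⟨v, ⟨hv, by exact_mod_cast h2⟩, rfl⟩
  · rintro ⟨v, ⟨hv, hv2⟩, rfl⟩
    refine ⟨⟨v, hv, rfl⟩, ?_⟩
    simp only [toPt]
    exact_mod_cast hv2

lemma hull_subset_le {T : Finset (ℤ × ℤ)} {N : ℤ} (h : ∀ v ∈ T, v.2 ≤ N) :
    hull T ⊆ {p : Pt | p.2 ≤ (N:ℝ)} := by
  apply convexHull_min
  · rintro p ⟨v, hv, rfl⟩
    show ((v.2 : ℝ)) ≤ (N : ℝ)
    exact_mod_cast h v hv
  · exact convex_halfSpace_le ⟨fun a b => rfl, fun r x => rfl⟩ _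

lemma hull_subset_ge {T : Finset (ℤ × ℤ)} {N : ℤ} (h : ∀ v ∈ T, N ≤ v.2) :
    hull T ⊆ {p : Pt | (N:ℝ) ≤ p.2} := by
  apply convexHull_min
  · rintro p ⟨v, hv, rfl⟩
    show (N : ℝ) ≤ ((v.2 : ℝ))
    exact_mod_cast h v hv
  · exact convex_halfSpace_ge ⟨fun a b => rfl, fun r x => rfl⟩ _

/-- Key lemma: two unimodular triangles on opposite sides of a horizontal line
intersect in the hull of their common vertices. -/
lemma hull_inter_sep (T₁ T₂ : Finset (ℤ × ℤ)) (N : ℤ)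
    (hc₁ : T₁.card = 3) (hc₂ : T₂.card = 3) (hu₁ : Unim T₁) (hu₂ : Unim T₂)
    (hle : ∀ v ∈ T₁, v.2 ≤ N) (hge : ∀ v ∈ T₂, N ≤ v.2) :
    hull T₁ ∩ hull T₂ = hull (T₁ ∩ T₂) := by
  classical
  -- vertices in the intersection lie on the line
  have hTT : T₁ ∩ T₂ = T₁.filter (fun v => v.2 = N) ∩ T₂.filter (fun v => v.2 = N) := by
    ext v
    simp only [Finset.mem_inter, Finset.mem_filter]
    constructor
    · rintro ⟨h1, h2⟩
      have := hle v h1; have := hge v h2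
      exact ⟨⟨h1, by omega⟩, h2, by omega⟩
    · rintro ⟨⟨h1, -⟩, h2, -⟩; exact ⟨h1, h2⟩
  -- restrict to the line
  have hline : hull T₁ ∩ hull T₂
      = (hull T₁ ∩ {p : Pt | p.2 = (N:ℝ)}) ∩ (hull T₂ ∩ {p : Pt | p.2 = (N:ℝ)}) := by
    ext p
    simp only [Set.mem_inter_iff, Set.mem_setOf_eq]
    constructor
    · rintro ⟨h1, h2⟩
      have hl := hull_subset_le hle h1
      have hg := hull_subset_ge hge h2
      have : p.2 = (N:ℝ) := le_antisymm hl hg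
      exact ⟨⟨h1, this⟩, h2, this⟩
    · rintro ⟨⟨h1, -⟩, h2, -⟩; exact ⟨h1, h2⟩
  obtain ⟨a, k, hk, hA⟩ := line_filter_shape hc₁ hu₁ N
  obtain ⟨b, l, hl, hB⟩ := line_filter_shape hc₂ hu₂ N
  have face₁ : hull T₁ ∩ {p : Pt | p.2 = (N:ℝ)}
      = {p : Pt | p.2 = (N:ℝ) ∧ (a:ℝ) ≤ p.1 ∧ p.1 ≤ (a:ℝ) + (k:ℝ)} := by
    have hss : ∀ p ∈ T₁.image toPt, p.2 ≤ (N:ℝ) := by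
      rintro p hp
      obtain ⟨v, hv, rfl⟩ := Finset.mem_image.1 hp
      show ((v.2 : ℝ)) ≤ (N : ℝ)
      exact_mod_cast hle v hv
    rw [hull_eq, hull_inter_line _ _ hss,
      filter_image_toPt, ← hull_eq, hA, hull_Icc _ _ _ hk]
  have face₂ : hull T₂ ∩ {p : Pt | p.2 = (N:ℝ)}
      = {p : Pt | p.2 = (N:ℝ) ∧ (b:ℝ) ≤ p.1 ∧ p.1 ≤ (b:ℝ) + (l:ℝ)} := by
    have hss : ∀ p ∈ T₂.image toPt, (N:ℝ) ≤ p.2 := by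
      rintro p hp
      obtain ⟨v, hv, rfl⟩ := Finset.mem_image.1 hp
      show (N : ℝ) ≤ ((v.2 : ℝ))
      exact_mod_cast hge v hv
    rw [hull_eq, hull_inter_line_ge _ _ hss,
      filter_image_toPt, ← hull_eq, hB, hull_Icc _ _ _ hl]
  set a' := a ⊔ b with ha'
  set m' := (a + k) ⊓ (b + l) with hm'
  have hk' : m' - a' ≤ 1 := by omega
  have hIccI : Finset.Icc a (a+k) ∩ Finset.Icc b (b+l) = Finset.Icc a' (a' + (m' - a')) := by
    ext x; simp only [Finset.mem_inter, Finset.mem_Icc]; omega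
  have hinterT : T₁ ∩ T₂ = (Finset.Icc a' (a' + (m' - a'))).image (fun x => (x, N)) := by
    rw [hTT, hA, hB, ← Finset.image_inter _ _ (fun x y h => by
      simpa using congrArg Prod.fst h), hIccI]
  rw [hline, face₁, face₂, hinterT, hull_Icc _ _ _ hk']
  ext p
  simp only [Set.mem_inter_iff, Set.mem_setOf_eq]
  have hca : ((a' : ℤ) : ℝ) = max (a:ℝ) (b:ℝ) := by rw [ha']; push_cast [Int.cast_max]; rfl
  have hcm : ((m' : ℤ) : ℝ) = min ((a:ℝ)+(k:ℝ)) ((b:ℝ)+(l:ℝ)) := by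
    rw [hm']; push_cast [Int.cast_min]; rfl
  constructor
  · rintro ⟨⟨h1, h2, h3⟩, -, h4, h5⟩
    refine ⟨h1, ?_, ?_⟩
    · rw [hca]; exact max_le h2 h4
    · have : (a':ℝ) + ((m':ℤ):ℝ) - (a':ℝ) = (m':ℝ) := by ring
      push_cast
      rw [hca, hcm]
      have := le_min h3 h5
      push_cast at this ⊢
      linarith [max_le h2 h4]
  · rintro ⟨h1, h2, h3⟩
    push_cast at h3
    rw [hca] at h2
    have h3' : p.1 ≤ (m' : ℝ) := by linarith
    rw [hcm] at h3'
    exact ⟨⟨h1, le_trans (le_max_left _ _) h2, le_trans h3' (min_le_left _ _)⟩,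
      h1, le_trans (le_max_right _ _) h2, le_trans h3' (min_le_right _ _)⟩

/-- Shift a lattice set vertically by `n`. -/
def shT (n : ℤ) (T : Finset (ℤ × ℤ)) : Finset (ℤ × ℤ) := T.image (fun v => v + (0, n))

lemma shift_inj (n : ℤ) : Function.Injective (fun v : ℤ × ℤ => v + (0, n)) :=
  fun a b h => by simpa using add_left_injective (0, n) h

lemma shT_card (n : ℤ) (T : Finset (ℤ × ℤ)) : (shT n T).card = T.card :=
  Finset.card_image_of_injective _ (shift_inj n)

lemma toPt_shift (n : ℤ) (v : ℤ × ℤ) :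
    toPt (v + (0, n)) = ((0:ℝ), (n:ℝ)) +ᵥ toPt v := by
  simp only [toPt, Prod.fst_add, Prod.snd_add, vadd_eq_add, Prod.mk_add_mk, Prod.mk.injEq]
  push_cast
  constructor <;> ring

lemma hull_shT (n : ℤ) (T : Finset (ℤ × ℤ)) :
    hull (shT n T) = ((0:ℝ), (n:ℝ)) +ᵥ hull T := by
  rw [hull, hull, ← convexHull_vadd]
  congr 1
  ext p
  simp only [shT, Finset.coe_image, Set.mem_image, Set.mem_vadd_set]
  constructor
  · rintro ⟨v, ⟨w, hw, rfl⟩, rfl⟩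
    exact ⟨toPt w, ⟨w, hw, rfl⟩, (toPt_shift n w).symm⟩
  · rintro ⟨q, ⟨w, hw, rfl⟩, rfl⟩
    exact ⟨w + (0, n), ⟨w, hw, rfl⟩, toPt_shift n w⟩

lemma unim_shT (n : ℤ) {T : Finset (ℤ × ℤ)} (h : Unim T) : Unim (shT n T) := by
  intro a ha b hb c hc hab hac hbc
  obtain ⟨a', ha', rfl⟩ := Finset.mem_image.1 ha
  obtain ⟨b', hb', rfl⟩ := Finset.mem_image.1 hb
  obtain ⟨c', hc', rfl⟩ := Finset.mem_image.1 hc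
  have := h a' ha' b' hb' c' hc'
    (fun h' => hab (by rw [h'])) (fun h' => hac (by rw [h'])) (fun h' => hbc (by rw [h']))
  convert this using 2
  simp only [Prod.fst_add, Prod.snd_add]
  ring

lemma mem_grid (m n : ℕ) (v : ℤ × ℤ) :
    toPt v ∈ gridRegion m n ↔ 0 ≤ v.1 ∧ v.1 ≤ (m:ℤ) ∧ 0 ≤ v.2 ∧ v.2 ≤ (n:ℤ) := by
  simp only [gridRegion, Set.mem_Icc, Prod.le_def, toPt]
  constructor
  · rintro ⟨⟨h1, h2⟩, h3, h4⟩
    exact ⟨by exact_mod_cast h1, by exact_mod_cast h3, by exact_mod_cast h2,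
      by exact_mod_cast h4⟩
  · rintro ⟨h1, h2, h3, h4⟩
    exact ⟨⟨by exact_mod_cast h1, by exact_mod_cast h3⟩, by exact_mod_cast h2,
      by exact_mod_cast h4⟩

lemma grid_vadd (m n₁ n₂ : ℕ) :
    ((0:ℝ), (n₁:ℝ)) +ᵥ gridRegion m n₂
      = Set.Icc (((0:ℝ), (n₁:ℝ)) : Pt) ((m:ℝ), (n₁:ℝ) + (n₂:ℝ)) := by
  ext p
  simp only [Set.mem_vadd_set, gridRegion, Set.mem_Icc, Prod.le_def, vadd_eq_add]
  constructor
  · rintro ⟨q, ⟨⟨h1, h2⟩, h3, h4⟩, rfl⟩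
    simp only [Prod.fst_add, Prod.snd_add]
    constructor
    · constructor <;> simp <;> linarith
    · constructor <;> simp <;> linarith
  · rintro ⟨⟨h1, h2⟩, h3, h4⟩
    refine ⟨(p.1, p.2 - n₁), ⟨⟨by simpa using h1, by simpa using h2⟩,
      by simpa using h3, by simp; linarith⟩, ?_⟩
    ext <;> simp

lemma grid_union (m n₁ n₂ : ℕ) :
    gridRegion m n₁ ∪ (((0:ℝ), (n₁:ℝ)) +ᵥ gridRegion m n₂) = gridRegion m (n₁ + n₂) := by
  rw [grid_vadd]
  ext p
  simp only [Set.mem_union, gridRegion, Set.mem_Icc, Prod.le_def]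
  push_cast
  constructor
  · rintro (⟨⟨h1, h2⟩, h3, h4⟩ | ⟨⟨h1, h2⟩, h3, h4⟩)
    · exact ⟨⟨h1, h2⟩, h3, by linarith [Nat.cast_nonneg (α := ℝ) n₂]⟩
    · exact ⟨⟨h1, by linarith [Nat.cast_nonneg (α := ℝ) n₁]⟩, h3, h4⟩
  · rintro ⟨⟨h1, h2⟩, h3, h4⟩
    rcases le_total p.2 (n₁:ℝ) with h | h
    · exact Or.inl ⟨⟨h1, h2⟩, h3, h⟩
    · exact Or.inr ⟨⟨h1, h⟩, h3, h4⟩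

section Glue

variable {m n₁ n₂ : ℕ}

lemma vert_le {R : Set Pt} (𝒯 : UnimodularTriangulation R) {T : Finset (ℤ × ℤ)}
    (hT : T ∈ 𝒯.tris) {v : ℤ × ℤ} (hv : v ∈ T) : toPt v ∈ R :=
  (𝒯.vertices v).1 ⟨T, hT, hv⟩

/-- Gluing two triangulations of stacked rectangles. -/
def glueUT (𝒯₁ : UnimodularTriangulation (gridRegion m n₁))
    (𝒯₂ : UnimodularTriangulation (gridRegion m n₂)) :
    UnimodularTriangulation (gridRegion m (n₁ + n₂)) where
  tris := 𝒯₁.tris ∪ (𝒯₂.tris.image (shT (n₁:ℤ)))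
  card3 := by
    intro T hT
    rcases Finset.mem_union.1 hT with h | h
    · exact 𝒯₁.card3 T h
    · obtain ⟨S, hS, rfl⟩ := Finset.mem_image.1 h
      rw [shT_card]
      exact 𝒯₂.card3 S hS
  unimodular := by
    intro T hT
    rcases Finset.mem_union.1 hT with h | h
    · exact 𝒯₁.unimodular T h
    · obtain ⟨S, hS, rfl⟩ := Finset.mem_image.1 h
      exact unim_shT _ (𝒯₂.unimodular S hS)
  cover := by
    classical
    rw [Finset.set_biUnion_union, Finset.set_biUnion_finset_image]
    have h2 : ⋃ S ∈ 𝒯₂.tris, hull (shT (n₁:ℤ) S)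
        = ((0:ℝ), ((n₁:ℤ):ℝ)) +ᵥ gridRegion m n₂ := by
      have : ∀ S ∈ 𝒯₂.tris, hull (shT (n₁:ℤ) S) = ((0:ℝ), ((n₁:ℤ):ℝ)) +ᵥ hull S :=
        fun S _ => hull_shT _ S
      calc ⋃ S ∈ 𝒯₂.tris, hull (shT (n₁:ℤ) S)
          = ⋃ S ∈ 𝒯₂.tris, (((0:ℝ), ((n₁:ℤ):ℝ)) +ᵥ hull S) := Set.iUnion₂_congr this
        _ = ((0:ℝ), ((n₁:ℤ):ℝ)) +ᵥ ⋃ S ∈ 𝒯₂.tris, hull S := by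
            simp_rw [← Set.image_vadd]
            rw [Set.image_iUnion₂]
        _ = ((0:ℝ), ((n₁:ℤ):ℝ)) +ᵥ gridRegion m n₂ := by rw [𝒯₂.cover]
    rw [h2, 𝒯₁.cover]
    push_cast
    exact grid_union m n₁ n₂
  glue := by
    classical
    have hle₁ : ∀ T ∈ 𝒯₁.tris, ∀ v ∈ T, v.2 ≤ (n₁:ℤ) := by
      intro T hT v hv
      exact ((mem_grid m n₁ v).1 (vert_le 𝒯₁ hT hv)).2.2.2
    have hge₂ : ∀ S ∈ 𝒯₂.tris, ∀ v ∈ shT (n₁:ℤ) S, (n₁:ℤ) ≤ v.2 := by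
      intro S hS v hv
      obtain ⟨w, hw, rfl⟩ := Finset.mem_image.1 hv
      have := ((mem_grid m n₂ w).1 (vert_le 𝒯₂ hS hw)).2.2.1
      simp only [Prod.snd_add]
      omega
    have mixed : ∀ T ∈ 𝒯₁.tris, ∀ S ∈ 𝒯₂.tris,
        hull T ∩ hull (shT (n₁:ℤ) S) = hull (T ∩ shT (n₁:ℤ) S) := by
      intro T hT S hS
      exact hull_inter_sep T (shT (n₁:ℤ) S) (n₁:ℤ) (𝒯₁.card3 T hT)
        (by rw [shT_card]; exact 𝒯₂.card3 S hS)
        (𝒯₁.unimodular T hT) (unim_shT _ (𝒯₂.unimodular S hS))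
        (hle₁ T hT) (hge₂ S hS)
    intro T₁ hT₁ T₂ hT₂
    rcases Finset.mem_union.1 hT₁ with h₁ | h₁ <;> rcases Finset.mem_union.1 hT₂ with h₂ | h₂
    · exact 𝒯₁.glue T₁ h₁ T₂ h₂
    · obtain ⟨S, hS, rfl⟩ := Finset.mem_image.1 h₂
      exact mixed T₁ h₁ S hS
    · obtain ⟨S, hS, rfl⟩ := Finset.mem_image.1 h₁
      rw [Set.inter_comm, Finset.inter_comm]
      exact mixed T₂ h₂ S hS
    · obtain ⟨S, hS, rfl⟩ := Finset.mem_image.1 h₁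
      obtain ⟨S', hS', rfl⟩ := Finset.mem_image.1 h₂
      rw [hull_shT, hull_shT, ← Set.vadd_set_inter, 𝒯₂.glue S hS S' hS']
      rw [show shT (n₁:ℤ) S ∩ shT (n₁:ℤ) S' = shT (n₁:ℤ) (S ∩ S') from
        (Finset.image_inter _ _ (shift_inj _)).symm, hull_shT]
  vertices := by
    classical
    intro v
    constructor
    · rintro ⟨T, hT, hv⟩
      rcases Finset.mem_union.1 hT with h | h
      · have := (mem_grid m n₁ v).1 (vert_le 𝒯₁ h hv)
        rw [mem_grid]
        push_cast
        omega
      · obtain ⟨S, hS, rfl⟩ := Finset.mem_image.1 h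
        obtain ⟨w, hw, rfl⟩ := Finset.mem_image.1 hv
        have := (mem_grid m n₂ w).1 (vert_le 𝒯₂ hS hw)
        rw [mem_grid]
        simp only [Prod.fst_add, Prod.snd_add]
        push_cast
        omega
    · intro hv
      rw [mem_grid] at hv
      push_cast at hv
      by_cases hcase : v.2 ≤ (n₁:ℤ)
      · have : toPt v ∈ gridRegion m n₁ := (mem_grid m n₁ v).2 ⟨hv.1, hv.2.1, hv.2.2.1, hcase⟩
        obtain ⟨T, hT, hvT⟩ := (𝒯₁.vertices v).2 this
        exact ⟨T, Finset.mem_union_left _ hT, hvT⟩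
      · push_neg at hcase
        set w : ℤ × ℤ := (v.1, v.2 - n₁) with hw
        have : toPt w ∈ gridRegion m n₂ := by
          rw [mem_grid]
          simp only [hw]
          omega
        obtain ⟨T, hT, hvT⟩ := (𝒯₂.vertices w).2 this
        refine ⟨shT (n₁:ℤ) T, Finset.mem_union_right _ (Finset.mem_image_of_mem _ hT), ?_⟩
        have : v = w + (0, (n₁:ℤ)) := by
          rw [hw]; ext <;> simp
        rw [this]
        exact Finset.mem_image_of_mem _ hvT

end Glue


lemma UT_ext {R : Set Pt} {x y : UnimodularTriangulation R} (h : x.tris = y.tris) :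
    x = y := by
  cases x; cases y; cases h; rfl

lemma UT_finite (m n : ℕ) : Finite (UnimodularTriangulation (gridRegion m n)) := by
  classical
  set box : Finset (ℤ × ℤ) := Finset.Icc (0, 0) ((m:ℤ), (n:ℤ)) with hbox
  apply Finite.of_injective
    (fun 𝒯 : UnimodularTriangulation (gridRegion m n) =>
      (⟨𝒯.tris, by
        rw [Finset.mem_powerset]
        intro T hT
        rw [Finset.mem_powerset]
        intro v hv
        have := (mem_grid m n v).1 (vert_le 𝒯 hT hv)
        rw [hbox, Finset.mem_Icc]
        exact ⟨⟨this.1, this.2.2.1⟩, this.2.1, this.2.2.2⟩⟩ :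
        {t // t ∈ box.powerset.powerset}))
  intro x y h
  exact UT_ext (congrArg Subtype.val h)

lemma tris_has_low {m n : ℕ} (𝒯 : UnimodularTriangulation (gridRegion m n))
    {T : Finset (ℤ × ℤ)} (hT : T ∈ 𝒯.tris) : ∃ v ∈ T, v.2 < (n:ℤ) := by
  by_contra hcon
  push_neg at hcon
  refine not_all_on_line (𝒯.card3 T hT) (𝒯.unimodular T hT) (n:ℤ) (fun v hv => ?_)
  have h1 := hcon v hv
  have h2 := ((mem_grid m n v).1 (vert_le 𝒯 hT hv)).2.2.2
  omega

lemma glueUT_inj (m n₁ n₂ : ℕ) :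
    Function.Injective (fun p :
        UnimodularTriangulation (gridRegion m n₁) ×
        UnimodularTriangulation (gridRegion m n₂) => glueUT p.1 p.2) := by
  classical
  rintro ⟨A₁, A₂⟩ ⟨B₁, B₂⟩ h
  have htris : A₁.tris ∪ (A₂.tris.image (shT (n₁:ℤ)))
      = B₁.tris ∪ (B₂.tris.image (shT (n₁:ℤ))) := congrArg UnimodularTriangulation.tris h
  have key : ∀ (X₁ : UnimodularTriangulation (gridRegion m n₁))
      (X₂ : UnimodularTriangulation (gridRegion m n₂)),
      (X₁.tris ∪ (X₂.tris.image (shT (n₁:ℤ)))).filter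
          (fun T => ∃ v ∈ T, v.2 < (n₁:ℤ)) = X₁.tris := by
    intro X₁ X₂
    rw [Finset.filter_union]
    have h1 : X₁.tris.filter (fun T => ∃ v ∈ T, v.2 < (n₁:ℤ)) = X₁.tris :=
      Finset.filter_true_of_mem (fun T hT => tris_has_low X₁ hT)
    have h2 : (X₂.tris.image (shT (n₁:ℤ))).filter (fun T => ∃ v ∈ T, v.2 < (n₁:ℤ)) = ∅ := by
      rw [Finset.filter_false_of_mem]
      intro T hT
      obtain ⟨S, hS, rfl⟩ := Finset.mem_image.1 hT
      rintro ⟨v, hv, hv2⟩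
      obtain ⟨w, hw, rfl⟩ := Finset.mem_image.1 hv
      have := ((mem_grid m n₂ w).1 (vert_le X₂ hS hw)).2.2.1
      simp only [Prod.snd_add] at hv2
      omega
    rw [h1, h2, Finset.union_empty]
  have hA1 : A₁.tris = B₁.tris := by
    have := key A₁ A₂
    rw [htris, key B₁ B₂] at this
    exact this.symm
  have hA2img : A₂.tris.image (shT (n₁:ℤ)) = B₂.tris.image (shT (n₁:ℤ)) := by
    have h2 : ∀ (X₁ : UnimodularTriangulation (gridRegion m n₁))
        (X₂ : UnimodularTriangulation (gridRegion m n₂)),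
        (X₁.tris ∪ (X₂.tris.image (shT (n₁:ℤ)))).filter
            (fun T => ¬ ∃ v ∈ T, v.2 < (n₁:ℤ)) = X₂.tris.image (shT (n₁:ℤ)) := by
      intro X₁ X₂
      rw [Finset.filter_union]
      have ha : X₁.tris.filter (fun T => ¬ ∃ v ∈ T, v.2 < (n₁:ℤ)) = ∅ := by
        rw [Finset.filter_false_of_mem]
        intro T hT
        exact fun hcon => hcon (tris_has_low X₁ hT)
      have hb : (X₂.tris.image (shT (n₁:ℤ))).filter (fun T => ¬ ∃ v ∈ T, v.2 < (n₁:ℤ))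
          = X₂.tris.image (shT (n₁:ℤ)) := by
        apply Finset.filter_true_of_mem
        intro T hT
        obtain ⟨S, hS, rfl⟩ := Finset.mem_image.1 hT
        rintro ⟨v, hv, hv2⟩
        obtain ⟨w, hw, rfl⟩ := Finset.mem_image.1 hv
        have := ((mem_grid m n₂ w).1 (vert_le X₂ hS hw)).2.2.1
        simp only [Prod.snd_add] at hv2
        omega
      rw [ha, hb, Finset.empty_union]
    have := h2 A₁ A₂
    rw [htris, h2 B₁ B₂] at this
    exact this.symm
  have hA2 : A₂.tris = B₂.tris :=
    Finset.image_injective (Finset.image_injective (shift_inj (n₁:ℤ))) hA2img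
  rw [Prod.mk.injEq]
  exact ⟨UT_ext hA1, UT_ext hA2⟩


/-- `f(m, n₁ + n₂) ≥ f(m, n₁) · f(m, n₂)` for positive integers
`m`, `n₁`, `n₂`. -/
theorem f_supermultiplicative (m n₁ n₂ : ℕ) (hm : 0 < m) (h₁ : 0 < n₁) (h₂ : 0 < n₂) :
    f m n₁ * f m n₂ ≤ f m (n₁ + n₂) := by
  have : Finite (UnimodularTriangulation (gridRegion m (n₁ + n₂))) := UT_finite m (n₁ + n₂)
  rw [f, f, f, ← Nat.card_prod]
  exact Nat.card_le_card_of_injective _ (glueUT_inj m n₁ n₂)
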